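/- arXiv:2204.13393 — 9 statements merged into one kernel-verified Lean document; each statement's English description precedes it below -/
import Mathlib

section
/- Let Q be an n×k real matrix with QᵀQ = I_k and let X be an n×s real matrix such that the horizontally concatenated n×(k+s) matrix [Q X] has full column rank k+s. Then there exist an n×s real matrix U with UᵀU = I_s and QᵀU = 0, a k×s real matrix P, and an invertible upper-triangular s×s real matrix N such that X = Q*P + U*N. -/
/-!
Take `P = QᵀX`, so the residual `Y = X - QP` satisfies `QᵀY = 0`. Full column rank of `[Q X]`
makes `Y` injective, hence its Gram matrix `YᵀY` positive definite. A Cholesky factor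
`YᵀY = NᵀN` (obtained from the LDL decomposition) gives `U = YN⁻¹` with orthonormal columns,
and `X = QP + UN`.
-/

open Matrix

namespace Matrix

theorem mulVec_injective_of_rank_eq_card {m n K : Type*} [Fintype n] [Field K]
    (A : Matrix m n K) (h : A.rank = Fintype.card n) : Function.Injective A.mulVec := by
  rw [mulVec_injective_iff, linearIndependent_iff_card_eq_finrank_span, ← h,
    rank_eq_finrank_span_cols, Set.finrank]

theorem mulVec_injective_sub_mul_of_fromCols {l m n R : Type*} [Fintype m] [Fintype n]
    [CommRing R] {A : Matrix l m R} {B : Matrix l n R} (C : Matrix m n R)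
    (h : Function.Injective (fromCols A B).mulVec) : Function.Injective (B - A * C).mulVec := by
  have hfromCols : ∀ v, (B - A * C) *ᵥ v = fromCols A B *ᵥ Sum.elim (-(C *ᵥ v)) v := fun v => by
    rw [fromCols_mulVec_sumElim, sub_mulVec, mulVec_neg, ← mulVec_mulVec]; abel
  intro v w hvw
  simp only [hfromCols] at hvw
  funext i
  simpa using congrFun (h hvw) (Sum.inr i)

theorem PosDef.exists_isUpperTriangular_transpose_mul_self {n : Type*} [Fintype n]
    [LinearOrder n] [WellFoundedLT n] [LocallyFiniteOrderBot n] {S : Matrix n n ℝ}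
    (hS : S.PosDef) : ∃ N : Matrix n n ℝ, N.IsUpperTriangular ∧ IsUnit N ∧ Nᵀ * N = S := by
  have hD : (LDL.diag hS).PosDef := by
    rw [LDL.diag_eq_lowerInv_conj]
    exact hS.mul_mul_conjTranspose_same (vecMul_injective_of_invertible _)
  have hd : ∀ i, 0 < LDL.diagEntries hS i := posDef_diagonal_iff.mp hD
  have hL : (LDL.lower hS).IsLowerTriangular :=
    blockTriangular_inv_of_blockTriangular fun _ _ => LDL.lowerInv_triangular hS
  set d : n → ℝ := fun i => √(LDL.diagEntries hS i)
  have hdd : diagonal d * diagonal d = LDL.diag hS := by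
    rw [diagonal_mul_diagonal, LDL.diag]
    exact congrArg diagonal (funext fun i => Real.mul_self_sqrt (hd i).le)
  refine ⟨diagonal d * (LDL.lower hS)ᵀ, ?_, ?_, ?_⟩
  · exact (blockTriangular_diagonal d).mul hL.transpose
  · refine IsUnit.mul ?_ ?_
    · rw [isUnit_diagonal]
      exact Pi.isUnit_iff.mpr fun i => (Real.sqrt_pos.mpr (hd i)).ne'.isUnit
    · rw [isUnit_transpose, LDL.lower, isUnit_nonsing_inv_iff]
      exact isUnit_of_invertible _
  · have := LDL.lower_conj_diag hS
    rw [conjTranspose_eq_transpose_of_trivial] at this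
    rw [transpose_mul, transpose_transpose, diagonal_transpose, Matrix.mul_assoc,
      ← Matrix.mul_assoc (diagonal d), hdd, ← Matrix.mul_assoc, this]

theorem exists_qr_of_mulVec_injective {m n : Type*} [Fintype m] [Fintype n] [LinearOrder n]
    [WellFoundedLT n] [LocallyFiniteOrderBot n] {Y : Matrix m n ℝ}
    (hY : Function.Injective Y.mulVec) :
    ∃ (U : Matrix m n ℝ) (N : Matrix n n ℝ),
      Uᵀ * U = 1 ∧ N.IsUpperTriangular ∧ IsUnit N ∧ Y = U * N := by
  have hS : (Yᵀ * Y).PosDef := by simpa using PosDef.conjTranspose_mul_self Y hY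
  obtain ⟨N, hNtri, hN, hNN⟩ := hS.exists_isUpperTriangular_transpose_mul_self
  have hdet := (isUnit_iff_isUnit_det N).mp hN
  refine ⟨Y * N⁻¹, N, ?_, hNtri, hN, (nonsing_inv_mul_cancel_right N Y hdet).symm⟩
  rw [transpose_mul, Matrix.mul_assoc, ← Matrix.mul_assoc Yᵀ, ← hNN, transpose_nonsing_inv,
    mul_nonsing_inv_cancel_right N _ hdet,
    nonsing_inv_mul _ (by rwa [det_transpose])]

end Matrix

/-- existence of the project-and-normalize (PQR) factorization
`X = Q*P + U*N` with `U` orthonormal, orthogonal to `Q`, and `N` invertible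
upper triangular, provided `[Q X]` has full column rank. -/
theorem pqr_exists (n k s : ℕ)
    (Q : Matrix (Fin n) (Fin k) ℝ) (X : Matrix (Fin n) (Fin s) ℝ)
    (hQ : Qᵀ * Q = 1)
    (hrank : (Matrix.fromCols Q X).rank = k + s) :
    ∃ (U : Matrix (Fin n) (Fin s) ℝ) (P : Matrix (Fin k) (Fin s) ℝ)
      (N : Matrix (Fin s) (Fin s) ℝ),
      Uᵀ * U = 1 ∧ Qᵀ * U = 0 ∧ IsUnit N ∧
      (∀ i j : Fin s, j < i → N i j = 0) ∧
      X = Q * P + U * N := by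
  set P := Qᵀ * X
  have hresidual : Qᵀ * (X - Q * P) = 0 := by
    rw [Matrix.mul_sub, ← Matrix.mul_assoc, hQ, Matrix.one_mul, sub_self]
  have hinj : Function.Injective (X - Q * P).mulVec :=
    mulVec_injective_sub_mul_of_fromCols P
      (mulVec_injective_of_rank_eq_card _ (by simpa using hrank))
  obtain ⟨U, N, hU, hNtri, hN, hQR⟩ := exists_qr_of_mulVec_injective hinj
  refine ⟨U, P, N, hU, ?_, hN, hNtri, ?_⟩
  · rw [← mul_nonsing_inv_cancel_right N (Qᵀ * U) ((isUnit_iff_isUnit_det N).mp hN),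
      Matrix.mul_assoc Qᵀ, ← hQR, hresidual, Matrix.zero_mul]
  · rw [← hQR, add_sub_cancel]
end

section
/- Let Q be an n×k real matrix with QᵀQ = I_k, let X be an n×s real matrix, set P = Qᵀ*X, and let N be an invertible s×s real matrix with Nᵀ*N = Xᵀ*X − Pᵀ*P. Define U = (X − Q*P)*N⁻¹. Then Qᵀ*U = 0, Uᵀ*U = I_s, and X = Q*P + U*N. -/
open Matrix

/-! Since `QᵀQ = I`, the residual `W = X − Q(QᵀX)` is orthogonal to the columns of `Q`, and
Pythagoras gives `WᵀW = XᵀX − PᵀP = NᵀN`. Hence `U = WN⁻¹` has Gram matrix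
`N⁻ᵀ(NᵀN)N⁻¹ = I`, and `UN = W` recovers `X = QP + UN`. -/

namespace Matrix

variable {m n p R : Type*} [Fintype m] [Fintype n] [DecidableEq n] [CommRing R]

theorem transpose_mul_sub_mul_transpose_mul_eq_zero {Q : Matrix m n R} (hQ : Qᵀ * Q = 1)
    (X : Matrix m p R) : Qᵀ * (X - Q * (Qᵀ * X)) = 0 := by
  rw [Matrix.mul_sub, ← Matrix.mul_assoc, hQ, Matrix.one_mul, sub_self]

theorem gram_sub_mul_transpose_mul [Fintype p] {Q : Matrix m n R} (hQ : Qᵀ * Q = 1)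
    (X : Matrix m p R) :
    (X - Q * (Qᵀ * X))ᵀ * (X - Q * (Qᵀ * X)) = Xᵀ * X - (Qᵀ * X)ᵀ * (Qᵀ * X) := by
  rw [transpose_sub, Matrix.sub_mul, transpose_mul, Matrix.mul_assoc,
    transpose_mul_sub_mul_transpose_mul_eq_zero hQ, Matrix.mul_zero, sub_zero,
    Matrix.mul_sub, ← Matrix.mul_assoc, transpose_mul, transpose_transpose]

theorem gram_mul_inv_eq_one {W : Matrix m n R} {N : Matrix n n R}
    (hN : IsUnit N) (hW : Wᵀ * W = Nᵀ * N) : (W * N⁻¹)ᵀ * (W * N⁻¹) = 1 := by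
  have hdet : IsUnit N.det := (isUnit_iff_isUnit_det N).mp hN
  have hdetT : IsUnit Nᵀ.det := by rwa [det_transpose]
  calc (W * N⁻¹)ᵀ * (W * N⁻¹) = Nᵀ⁻¹ * (Wᵀ * W) * N⁻¹ := by
        rw [transpose_mul, transpose_nonsing_inv, Matrix.mul_assoc, Matrix.mul_assoc,
          Matrix.mul_assoc]
    _ = (Nᵀ⁻¹ * Nᵀ) * (N * N⁻¹) := by
        rw [hW, Matrix.mul_assoc, Matrix.mul_assoc, Matrix.mul_assoc]
    _ = 1 := by rw [nonsing_inv_mul _ hdetT, mul_nonsing_inv _ hdet, Matrix.one_mul]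

end Matrix

/-- correctness of BCGS-PIP in exact arithmetic:
with `P = QᵀX`, `NᵀN = XᵀX − PᵀP` and `N` invertible,
`U = (X − Q*P)*N⁻¹` satisfies `QᵀU = 0`, `UᵀU = I` and `X = Q*P + U*N`. -/
theorem bcgs_pip_correct (n k s : ℕ)
    (Q : Matrix (Fin n) (Fin k) ℝ) (X : Matrix (Fin n) (Fin s) ℝ)
    (hQ : Qᵀ * Q = 1) (P : Matrix (Fin k) (Fin s) ℝ) (hP : P = Qᵀ * X)
    (N : Matrix (Fin s) (Fin s) ℝ) (hNinv : IsUnit N)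
    (hN : Nᵀ * N = Xᵀ * X - Pᵀ * P)
    (U : Matrix (Fin n) (Fin s) ℝ) (hU : U = (X - Q * P) * N⁻¹) :
    Qᵀ * U = 0 ∧ Uᵀ * U = 1 ∧ X = Q * P + U * N := by
  subst hP hU
  refine ⟨?_, ?_, ?_⟩
  · rw [← Matrix.mul_assoc, transpose_mul_sub_mul_transpose_mul_eq_zero hQ, Matrix.zero_mul]
  · exact gram_mul_inv_eq_one hNinv ((gram_sub_mul_transpose_mul hQ X).trans hN.symm)
  · rw [Matrix.mul_assoc, nonsing_inv_mul _ ((isUnit_iff_isUnit_det N).mp hNinv),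
      Matrix.mul_one, add_sub_cancel]
end

section
/- Let Q be an n×k real matrix with QᵀQ = I_k and let X be an n×s real matrix; set P = Qᵀ*X. Then the s×s matrix Xᵀ*X − Pᵀ*P is positive semidefinite, and it is positive definite if and only if the horizontally concatenated n×(k+s) matrix [Q X] has full column rank k+s. -/
open Matrix

/-! With `Y = X - Q (QᵀX)` the component of `X` orthogonal to the range of `Q`, one has
`XᵀX - PᵀP = YᵀY`, a Gram matrix, hence positive semidefinite, and positive definite exactly
when `Y` has trivial kernel. Since `Q u + X v = 0` forces `u = -QᵀX v` and `Y v = 0`, the kernel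
of `[Q X]` is trivial exactly when that of `Y` is. -/

namespace Matrix

variable {R m n k s : Type*}

theorem rank_eq_card_width_iff_injective_mulVec [CommRing R] [Nontrivial R] [Fintype n] (A : Matrix m n R) :
    A.rank = Fintype.card n ↔ Function.Injective A.mulVec := by
  rw [mulVec_injective_iff, linearIndependent_iff_card_eq_finrank_span,
    rank_eq_finrank_span_cols, Set.finrank, eq_comm]

theorem posDef_conjTranspose_mul_self_iff [Fintype m] [Fintype n] [CommRing R] [PartialOrder R]
    [StarRing R] [StarOrderedRing R] [NoZeroDivisors R] (A : Matrix m n R) :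
    (Aᴴ * A).PosDef ↔ Function.Injective A.mulVec := by
  refine ⟨fun h => ?_, PosDef.conjTranspose_mul_self A⟩
  refine (injective_iff_map_eq_zero A.mulVecLin).mpr fun v hv => ?_
  by_contra hv0
  have hpos := h.dotProduct_mulVec_pos hv0
  rw [← mulVec_mulVec, dotProduct_mulVec, ← star_mulVec, show A *ᵥ v = 0 from hv,
    dotProduct_zero] at hpos
  exact hpos.false

theorem transpose_mul_self_sub_eq_of_transpose_mul_self_eq_one [Fintype m] [Fintype k]
    [DecidableEq k] [CommRing R] {Q : Matrix m k R} (X : Matrix m s R) (hQ : Qᵀ * Q = 1) :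
    Xᵀ * X - (Qᵀ * X)ᵀ * (Qᵀ * X) = (X - Q * (Qᵀ * X))ᵀ * (X - Q * (Qᵀ * X)) := by
  set P := Qᵀ * X
  have hXQ : Xᵀ * (Q * P) = Pᵀ * P := by
    rw [← Matrix.mul_assoc, transpose_mul, transpose_transpose]
  have hQX : (Q * P)ᵀ * X = Pᵀ * P := by
    rw [transpose_mul, Matrix.mul_assoc]
  have hQQ : (Q * P)ᵀ * (Q * P) = Pᵀ * P := by
    rw [transpose_mul, Matrix.mul_assoc, ← Matrix.mul_assoc Qᵀ, hQ, Matrix.one_mul]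
  rw [transpose_sub, Matrix.sub_mul, Matrix.mul_sub, Matrix.mul_sub, hXQ, hQX, hQQ]
  abel

theorem fromCols_mulVec_sumElim_eq_zero_iff [Fintype m] [Fintype k] [Fintype s] [DecidableEq k]
    [Ring R] {Q : Matrix m k R} {L : Matrix k m R} (X : Matrix m s R) (hL : L * Q = 1)
    (u : k → R) (v : s → R) :
    fromCols Q X *ᵥ Sum.elim u v = 0 ↔ u = -((L * X) *ᵥ v) ∧ (X - Q * (L * X)) *ᵥ v = 0 := by
  rw [fromCols_mulVec_sumElim, sub_mulVec, ← mulVec_mulVec v Q]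
  constructor
  · intro h
    have hu : u = -((L * X) *ᵥ v) := by
      have := congr_arg (L *ᵥ ·) h
      simp only [mulVec_add, mulVec_mulVec, hL, one_mulVec, mulVec_zero] at this
      exact eq_neg_of_add_eq_zero_left this
    refine ⟨hu, ?_⟩
    rw [← h, hu, mulVec_neg]
    abel
  · rintro ⟨rfl, h⟩
    rw [mulVec_neg, ← h]
    abel

theorem injective_fromCols_mulVec_iff [Fintype m] [Fintype k] [Fintype s] [DecidableEq k]
    [CommRing R] {Q : Matrix m k R} {L : Matrix k m R} (X : Matrix m s R) (hL : L * Q = 1) :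
    Function.Injective (fromCols Q X).mulVec ↔ Function.Injective (X - Q * (L * X)).mulVec := by
  change Function.Injective (fromCols Q X).mulVecLin ↔
    Function.Injective (X - Q * (L * X)).mulVecLin
  simp only [injective_iff_map_eq_zero, mulVecLin_apply]
  constructor
  · intro h v hv
    have hw := h _ ((fromCols_mulVec_sumElim_eq_zero_iff X hL _ v).mpr ⟨rfl, hv⟩)
    exact funext fun i => congr_fun hw (Sum.inr i)
  · intro h w hw
    rw [← Sum.elim_comp_inl_inr w, fromCols_mulVec_sumElim_eq_zero_iff X hL] at hw
    obtain ⟨hu, hv⟩ := hw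
    rw [← Sum.elim_comp_inl_inr w, hu, h _ hv, mulVec_zero, neg_zero, Sum.elim_zero_zero]

end Matrix

/-- with `P = QᵀX`, the matrix `XᵀX − PᵀP` is positive
semidefinite, and it is positive definite iff `[Q X]` has full column rank. -/
theorem bcgs_pip_posDef_iff_fullRank (n k s : ℕ)
    (Q : Matrix (Fin n) (Fin k) ℝ) (X : Matrix (Fin n) (Fin s) ℝ)
    (hQ : Qᵀ * Q = 1) (P : Matrix (Fin k) (Fin s) ℝ) (hP : P = Qᵀ * X) :
    (Xᵀ * X - Pᵀ * P).PosSemidef ∧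
    ((Xᵀ * X - Pᵀ * P).PosDef ↔ (Matrix.fromCols Q X).rank = k + s) := by
  subst hP
  rw [transpose_mul_self_sub_eq_of_transpose_mul_self_eq_one X hQ,
    ← conjTranspose_eq_transpose_of_trivial]
  refine ⟨posSemidef_conjTranspose_mul_self _, ?_⟩
  rw [posDef_conjTranspose_mul_self_iff, ← injective_fromCols_mulVec_iff X hQ,
    ← rank_eq_card_width_iff_injective_mulVec, Fintype.card_sum, Fintype.card_fin,
    Fintype.card_fin]
end

section
/- Let Q be an n×k real matrix and U an n×s real matrix with QᵀQ = I_k, Uᵀ*U = I_s and Qᵀ*U = 0, let P be a k×s real matrix and N an s×s real matrix, and suppose X = Q*P + U*N. Then the rank of the horizontally concatenated n×(k+s) matrix [Q X] equals k + rank N. -/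
/-! `[Q X] = [Q U] * [[1, P], [0, N]]`, and `[Q U]` has orthonormal columns, hence is left
invertible, so `[Q X]` has the rank of the block triangular factor. An invertible column operation
clears `P`, leaving the block diagonal `[[1, 0], [0, N]]` of rank `k + rank N`. -/

open Matrix Module

theorem Submodule.finrank_prod {K M M' : Type*} [DivisionRing K] [AddCommGroup M]
    [AddCommGroup M'] [Module K M] [Module K M'] (p : Submodule K M) (q : Submodule K M')
    [FiniteDimensional K p] [FiniteDimensional K q] :
    finrank K (p.prod q) = finrank K p + finrank K q := by
  have hinj : Function.Injective (p.subtype.prodMap q.subtype) :=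
    Prod.map_injective.mpr ⟨p.injective_subtype, q.injective_subtype⟩
  have hrange : LinearMap.range (p.subtype.prodMap q.subtype) = p.prod q := by
    rw [LinearMap.range_prodMap, Submodule.range_subtype, Submodule.range_subtype]
  rw [← ((LinearEquiv.ofInjective _ hinj).trans (LinearEquiv.ofEq _ _ hrange)).finrank_eq,
    Module.finrank_prod]

namespace Matrix

variable {R : Type*} {l m n o : Type*}

theorem transpose_mul_self_fromCols_eq_one [CommRing R] [Fintype l] [DecidableEq m]
    [DecidableEq n] {Q : Matrix l m R} {U : Matrix l n R}
    (hQ : Qᵀ * Q = 1) (hU : Uᵀ * U = 1) (hQU : Qᵀ * U = 0) :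
    (fromCols Q U)ᵀ * fromCols Q U = 1 := by
  have hUQ : Uᵀ * Q = 0 := by
    rw [← transpose_transpose Q, ← transpose_mul, hQU, transpose_zero]
  rw [transpose_fromCols, fromRows_mul_fromCols, hQ, hU, hQU, hUQ, fromBlocks_one]

theorem rank_mul_eq_right_of_mul_eq_one [CommRing R] [StrongRankCondition R] [Fintype l]
    [Fintype m] [DecidableEq m] [Fintype n] {W : Matrix l m R} {V : Matrix m l R} (hVW : V * W = 1)
    (B : Matrix m n R) : (W * B).rank = B.rank := by
  refine le_antisymm (rank_mul_le_right W B) ?_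
  calc B.rank = (V * (W * B)).rank := by rw [← Matrix.mul_assoc, hVW, Matrix.one_mul]
    _ ≤ (W * B).rank := rank_mul_le_right _ _

theorem rank_fromBlocks_zero_zero [Field R] [Fintype m] [Fintype o]
    (A : Matrix l m R) (D : Matrix n o R) :
    (fromBlocks A 0 0 D).rank = A.rank + D.rank := by
  have hmap : (fromBlocks A 0 0 D).mulVecLin =
      (LinearEquiv.sumArrowLequivProdArrow l n R R).symm.toLinearMap ∘ₗ
        (A.mulVecLin.prodMap D.mulVecLin) ∘ₗ
          (LinearEquiv.sumArrowLequivProdArrow m o R R).toLinearMap := by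
    ext x (i | i) <;> simp [fromBlocks_mulVec] <;> rfl
  rw [rank, hmap, LinearMap.range_comp, LinearMap.range_comp, LinearEquiv.range,
    Submodule.map_top, LinearEquiv.finrank_map_eq, LinearMap.range_prodMap,
    Submodule.finrank_prod, rank, rank]

theorem rank_fromBlocks_one_zero [Field R] [Fintype l] [Fintype m] [DecidableEq l]
    [DecidableEq m] (B : Matrix l m R) (D : Matrix n m R) :
    (fromBlocks (1 : Matrix l l R) B 0 D).rank = Fintype.card l + D.rank := by
  have hfactor : fromBlocks (1 : Matrix l l R) B 0 D =
      fromBlocks (1 : Matrix l l R) 0 0 D * fromBlocks 1 B 0 (1 : Matrix m m R) := by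
    simp [fromBlocks_multiply]
  have hunit : IsUnit (fromBlocks 1 B 0 (1 : Matrix m m R)).det := by simp
  rw [hfactor, rank_mul_eq_left_of_isUnit_det _ _ hunit, rank_fromBlocks_zero_zero, rank_one]

end Matrix

/-- if `X = Q*P + U*N` with `[Q U]` having jointly orthonormal
columns, then `rank [Q X] = k + rank N`. -/
theorem rank_fromColumns_eq_add_rank (n k s : ℕ)
    (Q : Matrix (Fin n) (Fin k) ℝ) (U : Matrix (Fin n) (Fin s) ℝ)
    (hQ : Qᵀ * Q = 1) (hU : Uᵀ * U = 1) (hQU : Qᵀ * U = 0)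
    (P : Matrix (Fin k) (Fin s) ℝ) (N : Matrix (Fin s) (Fin s) ℝ)
    (X : Matrix (Fin n) (Fin s) ℝ) (hX : X = Q * P + U * N) :
    (Matrix.fromCols Q X).rank = k + N.rank := by
  have hfactor : fromCols Q X = fromCols Q U * fromBlocks 1 P 0 N := by
    simp [fromCols_mul_fromBlocks, hX]
  rw [hfactor, rank_mul_eq_right_of_mul_eq_one (transpose_mul_self_fromCols_eq_one hQ hU hQU),
    rank_fromBlocks_one_zero, Fintype.card_fin]
end

section
/- Let u ∈ ℝᵐ be nonzero, let λ = ‖u‖₂, and let σ ∈ {−1, 1} be such that σ·u₀ ≤ 0, where u₀ is the first entry of u. Then w := u − σλe₀ is nonzero (e₀ the first standard basis vector), and the Householder reflector H = I − 2vvᵀ with v = w/‖w‖₂ satisfies H·u = σλe₀. -/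
/-!
Since `u` and `σλe₀` have the same length, `w = u - σλe₀` satisfies `w ⬝ᵥ w = 2 (w ⬝ᵥ u)`,
and for such `w` the reflector `I - 2vvᵀ` sends `u` to `u - w = σλe₀`. The sign choice makes
`w ⬝ᵥ u = λ² - σλu₀ ≥ λ² > 0`, so in particular `w ≠ 0`.
-/

open Matrix

section

variable {n : Type*} [Fintype n]

theorem norm_toLp_sq_eq_dotProduct (x : n → ℝ) :
    ‖(WithLp.equiv 2 (n → ℝ)).symm x‖ ^ 2 = x ⬝ᵥ x := by
  rw [EuclideanSpace.real_norm_sq_eq]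
  simp [dotProduct, sq]

theorem reflector_mulVec {R : Type*} [CommRing R] [DecidableEq n] (v u : n → R) :
    (1 - (2 : R) • vecMulVec v v) *ᵥ u = u - (2 * (v ⬝ᵥ u)) • v := by
  rw [sub_mulVec, one_mulVec, smul_mulVec, vecMulVec_mulVec, op_smul_eq_smul, smul_smul]

theorem dotProduct_sub_self_eq_two_mul {R : Type*} [CommRing R] {u x : n → R}
    (h : x ⬝ᵥ x = u ⬝ᵥ u) : (u - x) ⬝ᵥ (u - x) = 2 * ((u - x) ⬝ᵥ u) := by
  simp only [sub_dotProduct, dotProduct_sub, dotProduct_comm x u, h]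
  ring

theorem householder_mulVec_eq_sub [DecidableEq n] {w u : n → ℝ} (hw : w ≠ 0)
    (h : w ⬝ᵥ w = 2 * (w ⬝ᵥ u)) :
    (1 - (2 : ℝ) • vecMulVec (‖(WithLp.equiv 2 (n → ℝ)).symm w‖⁻¹ • w)
      (‖(WithLp.equiv 2 (n → ℝ)).symm w‖⁻¹ • w)) *ᵥ u = u - w := by
  set a := ‖(WithLp.equiv 2 (n → ℝ)).symm w‖⁻¹
  have ha : a ^ 2 * (w ⬝ᵥ w) = 1 := by
    rw [inv_pow, norm_toLp_sq_eq_dotProduct, inv_mul_cancel₀ (dotProduct_self_eq_zero.not.mpr hw)]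
  rw [reflector_mulVec, smul_dotProduct, smul_smul, smul_eq_mul]
  congr 1
  convert one_smul ℝ w using 2
  linear_combination ha - a ^ 2 * h

theorem dotProduct_sub_smul_single_pos [DecidableEq n] {u : n → ℝ} {c : ℝ} (i : n)
    (hc : c ≠ 0) (hcu : c ^ 2 = u ⬝ᵥ u) (hsign : c * u i ≤ 0) :
    0 < (u - c • Pi.single i 1) ⬝ᵥ u := by
  rw [sub_dotProduct, smul_dotProduct, single_dotProduct, one_mul, smul_eq_mul, ← hcu]
  linarith [pow_pos (abs_pos.mpr hc) 2, sq_abs c]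

end

/-- the Householder reflector step. For a nonzero `u ∈ ℝᵐ`,
`λ = ‖u‖₂`, and a sign `σ ∈ {−1,1}` with `σ·u₀ ≤ 0`, the vector
`w = u − σλe₀` is nonzero and the reflector `H = I − 2vvᵀ` with
`v = w/‖w‖₂` maps `u` to `σλe₀`. -/
theorem householder_reflector_step (m : ℕ) [NeZero m]
    (u : Fin m → ℝ) (hu : u ≠ 0)
    (σ : ℝ) (hσ : σ = -1 ∨ σ = 1)
    (hsign : σ * u 0 ≤ 0)
    (lam : ℝ) (hlam : lam = ‖(WithLp.equiv 2 (Fin m → ℝ)).symm u‖)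
    (w : Fin m → ℝ)
    (hw : w = u - (σ * lam) • (Pi.single (0 : Fin m) (1 : ℝ) : Fin m → ℝ))
    (v : Fin m → ℝ) (hv : v = ‖(WithLp.equiv 2 (Fin m → ℝ)).symm w‖⁻¹ • w)
    (H : Matrix (Fin m) (Fin m) ℝ)
    (hH : H = 1 - (2 : ℝ) • Matrix.vecMulVec v v) :
    w ≠ 0 ∧
    H.mulVec u = (σ * lam) • (Pi.single (0 : Fin m) (1 : ℝ) : Fin m → ℝ) := by
  have hlam_pos : 0 < lam := hlam ▸ norm_pos_iff.mpr (by simpa using hu)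
  have hσ_sq : σ ^ 2 = 1 := by rcases hσ with rfl | rfl <;> norm_num
  have hc_sq : (σ * lam) ^ 2 = u ⬝ᵥ u := by
    rw [mul_pow, hσ_sq, one_mul, hlam, norm_toLp_sq_eq_dotProduct]
  have hc : σ * lam ≠ 0 := mul_ne_zero (by rintro rfl; norm_num at hσ_sq) hlam_pos.ne'
  have hc_sign : σ * lam * u 0 ≤ 0 := by
    rw [mul_right_comm]; exact mul_nonpos_of_nonpos_of_nonneg hsign hlam_pos.le
  have hwu : 0 < w ⬝ᵥ u := hw ▸ dotProduct_sub_smul_single_pos 0 hc hc_sq hc_sign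
  have hw_ne : w ≠ 0 := by rintro rfl; simp at hwu
  have hww : w ⬝ᵥ w = 2 * (w ⬝ᵥ u) := by
    rw [hw]
    refine dotProduct_sub_self_eq_two_mul ?_
    rw [smul_dotProduct, dotProduct_smul, single_dotProduct, Pi.single_eq_same]
    simpa [sq] using hc_sq
  refine ⟨hw_ne, ?_⟩
  rw [hH, hv, householder_mulVec_eq_sub hw_ne hww, hw, sub_sub_cancel]
end

section
/- Let p ≥ 1, and for each i ∈ Fin p let Aᵢ be an nᵢ×s real matrix with Aᵢ = Qᵢ*Rᵢ, where Qᵢ is nᵢ×s with Qᵢᵀ*Qᵢ = I_s and Rᵢ is s×s. Let Sᵢ (s×s for each i) and R (s×s) satisfy Rᵢ = Sᵢ*R for every i and ∑_{i} Sᵢᵀ*Sᵢ = I_s. Then the matrix A with row blocks A₁,…,A_p satisfies A = Q*R, where Q is the matrix with row blocks Q₁*S₁,…,Q_p*S_p, and Qᵀ*Q = I_s. -/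
open Matrix

/-!
Stacking blocks vertically commutes with right multiplication, and the Gram matrix of a
stack is the sum of the Gram matrices of its blocks. Hence the stack of the `Qᵢ * Sᵢ` times
`R` is the stack of the `Qᵢ * Rᵢ = Aᵢ`, and its Gram matrix is
`∑ Sᵢᵀ * (Qᵢᵀ * Qᵢ) * Sᵢ = ∑ Sᵢᵀ * Sᵢ = 1`.
-/

namespace Matrix

variable {ι : Type*} {m : ι → Type*} {n k α : Type*}

def stackRows (B : ∀ i, Matrix (m i) n α) : Matrix (Σ i, m i) n α :=
  of fun x c => B x.1 x.2 c

@[simp]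
theorem stackRows_apply (B : ∀ i, Matrix (m i) n α) (x : Σ i, m i) (c : n) :
    stackRows B x c = B x.1 x.2 c :=
  rfl

theorem stackRows_mul [Fintype n] [NonUnitalNonAssocSemiring α]
    (B : ∀ i, Matrix (m i) n α) (M : Matrix n k α) :
    stackRows B * M = stackRows fun i => B i * M := by
  ext x c
  simp only [stackRows_apply, mul_apply]

theorem transpose_stackRows_mul_stackRows [Fintype ι] [∀ i, Fintype (m i)]
    [NonUnitalNonAssocSemiring α] (B C : ∀ i, Matrix (m i) n α) :
    (stackRows B)ᵀ * stackRows C = ∑ i, (B i)ᵀ * C i := by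
  ext b c
  simp only [mul_apply, transpose_apply, stackRows_apply, sum_apply, Fintype.sum_sigma]

theorem transpose_mul_mul_of_transpose_mul_self_eq_one [Fintype n] [DecidableEq n] [Fintype k]
    [CommSemiring α] {l : Type*} {Q : Matrix k n α} (hQ : Qᵀ * Q = 1) (S : Matrix n l α) :
    (Q * S)ᵀ * (Q * S) = Sᵀ * S := by
  rw [transpose_mul, Matrix.mul_assoc, ← Matrix.mul_assoc Qᵀ, hQ, Matrix.one_mul]

end Matrix

theorem tree_tsqr_reduction_correct_general (p s : ℕ) (nrows : Fin p → ℕ)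
    (A : ∀ i : Fin p, Matrix (Fin (nrows i)) (Fin s) ℝ)
    (Qb : ∀ i : Fin p, Matrix (Fin (nrows i)) (Fin s) ℝ)
    (Rb S : Fin p → Matrix (Fin s) (Fin s) ℝ)
    (R : Matrix (Fin s) (Fin s) ℝ)
    (hfac : ∀ i, A i = Qb i * Rb i)
    (hQb : ∀ i, (Qb i)ᵀ * Qb i = 1)
    (hS : ∀ i, Rb i = S i * R)
    (hSortho : ∑ i : Fin p, (S i)ᵀ * S i = 1)
    (Astk Q : Matrix ((i : Fin p) × Fin (nrows i)) (Fin s) ℝ)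
    (hAstk : ∀ (x : (i : Fin p) × Fin (nrows i)) (c : Fin s),
      Astk x c = A x.1 x.2 c)
    (hQ : ∀ (x : (i : Fin p) × Fin (nrows i)) (c : Fin s),
      Q x c = (Qb x.1 * S x.1) x.2 c) :
    Astk = Q * R ∧ Qᵀ * Q = 1 := by
  have hAstk_eq : Astk = stackRows A := ext hAstk
  have hQ_eq : Q = stackRows fun i => Qb i * S i := ext hQ
  subst hAstk_eq hQ_eq
  constructor
  · simp only [stackRows_mul, Matrix.mul_assoc, ← hS, ← hfac]
  · rw [transpose_stackRows_mul_stackRows, ← hSortho]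
    exact Finset.sum_congr rfl fun i _ =>
      transpose_mul_mul_of_transpose_mul_self_eq_one (hQb i) (S i)

/-- correctness of one reduction step of the tree TSQR
algorithm: local factorizations `Aᵢ = Qᵢ*Rᵢ` together with a factorization
`Rᵢ = Sᵢ*R` of the stacked `R`-factors (with `∑ Sᵢᵀ*Sᵢ = I`) yield a global
QR factorization `A = Q*R` where `Q`, with row blocks `Qᵢ*Sᵢ`, has
orthonormal columns. -/
theorem tree_tsqr_reduction_correct (p s : ℕ) (hp : 1 ≤ p) (nrows : Fin p → ℕ)
    (A : ∀ i : Fin p, Matrix (Fin (nrows i)) (Fin s) ℝ)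
    (Qb : ∀ i : Fin p, Matrix (Fin (nrows i)) (Fin s) ℝ)
    (Rb S : Fin p → Matrix (Fin s) (Fin s) ℝ)
    (R : Matrix (Fin s) (Fin s) ℝ)
    (hfac : ∀ i, A i = Qb i * Rb i)
    (hQb : ∀ i, (Qb i)ᵀ * Qb i = 1)
    (hS : ∀ i, Rb i = S i * R)
    (hSortho : ∑ i : Fin p, (S i)ᵀ * S i = 1)
    (Astk Q : Matrix ((i : Fin p) × Fin (nrows i)) (Fin s) ℝ)
    (hAstk : ∀ (x : (i : Fin p) × Fin (nrows i)) (c : Fin s),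
      Astk x c = A x.1 x.2 c)
    (hQ : ∀ (x : (i : Fin p) × Fin (nrows i)) (c : Fin s),
      Q x c = (Qb x.1 * S x.1) x.2 c) :
    Astk = Q * R ∧ Qᵀ * Q = 1 :=
  tree_tsqr_reduction_correct_general p s nrows A Qb Rb S R hfac hQb hS hSortho Astk Q hAstk hQ
end

section
/- Let p ≥ 1 and for each i ∈ Fin p let Rᵢ, P̃ᵢ, Ñᵢ be real matrices of sizes k×k, k×s and s×s respectively, with ∑_i Rᵢᵀ*Rᵢ = I_k. Then the vertically stacked matrix whose i-th row block is the 2×2 block matrix [Rᵢ P̃ᵢ; 0 Ñᵢ] has orthonormal columns (its Gram matrix is I_{k+s}) if and only if ∑_i Rᵢᵀ*P̃ᵢ = 0 and ∑_i (P̃ᵢᵀ*P̃ᵢ + Ñᵢᵀ*Ñᵢ) = I_s. -/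
/-!
Summing the Gram matrices of the row blocks gives
`Mᵀ * M = [∑ Rᵢᵀ Rᵢ, ∑ Rᵢᵀ P̃ᵢ; (∑ Rᵢᵀ P̃ᵢ)ᵀ, ∑ (P̃ᵢᵀ P̃ᵢ + Ñᵢᵀ Ñᵢ)]`. The top-left block is already
the identity, and the bottom-left block vanishes as soon as the top-right one does.
-/

open Matrix

namespace Matrix

variable {ι l m n o R : Type*} [Fintype ι]

theorem transpose_mul_eq_sum_sigma {κ : ι → Type*} [∀ i, Fintype (κ i)] [CommSemiring R]
    (A : Matrix (Σ i, κ i) m R) (B : Matrix (Σ i, κ i) n R) :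
    Aᵀ * B = ∑ i, (A.submatrix (Sigma.mk i) id)ᵀ * B.submatrix (Sigma.mk i) id := by
  ext a c
  simp only [sum_apply, mul_apply, transpose_apply, submatrix_apply, id]
  rw [← Finset.univ_sigma_univ, Finset.sum_sigma]

theorem fromBlocks_sum [AddCommMonoid R] (A : ι → Matrix n l R) (B : ι → Matrix n m R)
    (C : ι → Matrix o l R) (D : ι → Matrix o m R) :
    ∑ i, fromBlocks (A i) (B i) (C i) (D i) =
      fromBlocks (∑ i, A i) (∑ i, B i) (∑ i, C i) (∑ i, D i) := by
  ext (a | a) (c | c) <;> simp [sum_apply]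

theorem transpose_mul_self_fromBlocks_zero₂₁ [Fintype l] [Fintype o] [Semiring R]
    (A : Matrix l n R) (B : Matrix l m R) (D : Matrix o m R) :
    (fromBlocks A B 0 D)ᵀ * fromBlocks A B 0 D =
      fromBlocks (Aᵀ * A) (Aᵀ * B) (Bᵀ * A) (Bᵀ * B + Dᵀ * D) := by
  simp [fromBlocks_transpose, fromBlocks_multiply]

theorem fromBlocks_one₁₁_eq_one_iff [DecidableEq l] [DecidableEq m] [Zero R] [One R]
    (B : Matrix l m R) (C : Matrix m l R) (D : Matrix m m R) : fromBlocks 1 B C D = 1 ↔ B = 0 ∧ C = 0 ∧ D = 1 := by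
  rw [← fromBlocks_one, fromBlocks_inj]
  simp

end Matrix

theorem tree_tspqr_reduced_orthonormal_iff_general (p k s : ℕ)
    (Rb : Fin p → Matrix (Fin k) (Fin k) ℝ)
    (Pt : Fin p → Matrix (Fin k) (Fin s) ℝ)
    (Nt : Fin p → Matrix (Fin s) (Fin s) ℝ)
    (hRb : ∑ i : Fin p, (Rb i)ᵀ * Rb i = 1)
    (M : Matrix ((_ : Fin p) × (Fin k ⊕ Fin s)) (Fin k ⊕ Fin s) ℝ)
    (hM : ∀ (x : (_ : Fin p) × (Fin k ⊕ Fin s)) (c : Fin k ⊕ Fin s),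
      M x c = Matrix.fromBlocks (Rb x.1) (Pt x.1) 0 (Nt x.1) x.2 c) :
    Mᵀ * M = 1 ↔
      (∑ i : Fin p, (Rb i)ᵀ * Pt i = 0 ∧
       ∑ i : Fin p, ((Pt i)ᵀ * Pt i + (Nt i)ᵀ * Nt i) = 1) := by
  have hblock (i : Fin p) : M.submatrix (Sigma.mk i) id = fromBlocks (Rb i) (Pt i) 0 (Nt i) := by
    ext a c
    exact hM ⟨i, a⟩ c
  have hcross : ∑ i, (Pt i)ᵀ * Rb i = (∑ i, (Rb i)ᵀ * Pt i)ᵀ := by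
    simp [transpose_sum, transpose_mul]
  rw [transpose_mul_eq_sum_sigma]
  simp only [hblock, transpose_mul_self_fromBlocks_zero₂₁, fromBlocks_sum, hRb, hcross,
    fromBlocks_one₁₁_eq_one_iff]
  constructor
  · rintro ⟨hPt, -, hN⟩
    exact ⟨hPt, hN⟩
  · rintro ⟨hPt, hN⟩
    exact ⟨hPt, by rw [hPt, transpose_zero], hN⟩

/-- characterization of orthonormality of the reduced factor of
the TreeTSPQR reduction step: assuming `∑ Rᵢᵀ*Rᵢ = I`, the vertically stacked
matrix with row blocks `[Rᵢ P̃ᵢ; 0 Ñᵢ]` has orthonormal columns iff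
`∑ Rᵢᵀ*P̃ᵢ = 0` and `∑ (P̃ᵢᵀ*P̃ᵢ + Ñᵢᵀ*Ñᵢ) = I`. -/
theorem tree_tspqr_reduced_orthonormal_iff (p k s : ℕ) (hp : 1 ≤ p)
    (Rb : Fin p → Matrix (Fin k) (Fin k) ℝ)
    (Pt : Fin p → Matrix (Fin k) (Fin s) ℝ)
    (Nt : Fin p → Matrix (Fin s) (Fin s) ℝ)
    (hRb : ∑ i : Fin p, (Rb i)ᵀ * Rb i = 1)
    (M : Matrix ((_ : Fin p) × (Fin k ⊕ Fin s)) (Fin k ⊕ Fin s) ℝ)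
    (hM : ∀ (x : (_ : Fin p) × (Fin k ⊕ Fin s)) (c : Fin k ⊕ Fin s),
      M x c = Matrix.fromBlocks (Rb x.1) (Pt x.1) 0 (Nt x.1) x.2 c) :
    Mᵀ * M = 1 ↔
      (∑ i : Fin p, (Rb i)ᵀ * Pt i = 0 ∧
       ∑ i : Fin p, ((Pt i)ᵀ * Pt i + (Nt i)ᵀ * Nt i) = 1) :=
  tree_tspqr_reduced_orthonormal_iff_general p k s Rb Pt Nt hRb M hM
end

section
/- Let A₁ be an n₁×s real matrix with A₁ = Q₁*R₁, where Q₁ᵀ*Q₁ = I_s and R₁ is s×s, and let A₂ be an n₂×s real matrix. Suppose the vertically stacked (s+n₂)×s matrix [R₁; A₂] factors as Q₂*R with Q₂ᵀ*Q₂ = I_s, and write Q₂ = [T; B] with top block T of size s×s and bottom block B of size n₂×s. Then the stacked matrix A = [A₁; A₂] satisfies A = Q̂*R, where Q̂ = [Q₁*T; B], and Q̂ᵀ*Q̂ = I_s. -/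
/-!
Embedding the second factorization through the block-diagonal matrix `D = [Q₁ 0; 0 I]` gives
`[Q₁ T; B] = D [T; B] = D Q₂` and `[A₁; A₂] = D [R₁; A₂] = D Q₂ R`. Both `D` and `Q₂` have
orthonormal columns, and orthonormality of columns is preserved under products.
-/

open Matrix

namespace Matrix

variable {R : Type*} [CommSemiring R] {l m n k : Type*}

theorem transpose_mul_self_mul_of_eq_one [Fintype l] [Fintype m] [Fintype n] [DecidableEq m]
    [DecidableEq n] {Q : Matrix l m R} {P : Matrix m n R}
    (hQ : Qᵀ * Q = 1) (hP : Pᵀ * P = 1) : (Q * P)ᵀ * (Q * P) = 1 := by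
  rw [transpose_mul, Matrix.mul_assoc, ← Matrix.mul_assoc Qᵀ, hQ, Matrix.one_mul, hP]

theorem fromBlocks_zero_one_transpose_mul_self [Fintype l] [Fintype k] [DecidableEq m]
    [DecidableEq k] {Q : Matrix l m R} (hQ : Qᵀ * Q = 1) :
    (fromBlocks Q 0 0 (1 : Matrix k k R))ᵀ * fromBlocks Q 0 0 (1 : Matrix k k R) = 1 := by
  rw [fromBlocks_transpose, fromBlocks_multiply, hQ]
  simp

theorem fromBlocks_zero_one_mul_fromRows [Fintype m] [Fintype k] [DecidableEq k]
    (Q : Matrix l m R) (A : Matrix m n R) (B : Matrix k n R) :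
    fromBlocks Q 0 0 (1 : Matrix k k R) * fromRows A B = fromRows (Q * A) B := by
  simp [fromBlocks_mul_fromRows]

end Matrix

/-- correctness of one step of the flat (sequential) TSQR
recursion: if `A₁ = Q₁*R₁` with `Q₁` orthonormal and `[R₁; A₂] = Q₂*R` with
`Q₂ = [T; B]` orthonormal, then `[A₁; A₂] = [Q₁*T; B] * R` and `[Q₁*T; B]`
has orthonormal columns. -/
theorem flat_tsqr_step_correct (n₁ n₂ s : ℕ)
    (A₁ : Matrix (Fin n₁) (Fin s) ℝ) (A₂ : Matrix (Fin n₂) (Fin s) ℝ)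
    (Q₁ : Matrix (Fin n₁) (Fin s) ℝ) (R₁ : Matrix (Fin s) (Fin s) ℝ)
    (hA₁ : A₁ = Q₁ * R₁) (hQ₁ : Q₁ᵀ * Q₁ = 1)
    (Q₂ : Matrix (Fin s ⊕ Fin n₂) (Fin s) ℝ) (R : Matrix (Fin s) (Fin s) ℝ)
    (hQ₂fac : Matrix.fromRows R₁ A₂ = Q₂ * R) (hQ₂ : Q₂ᵀ * Q₂ = 1)
    (T : Matrix (Fin s) (Fin s) ℝ) (B : Matrix (Fin n₂) (Fin s) ℝ)
    (hTB : Q₂ = Matrix.fromRows T B) :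
    Matrix.fromRows A₁ A₂ = Matrix.fromRows (Q₁ * T) B * R ∧
    (Matrix.fromRows (Q₁ * T) B)ᵀ * Matrix.fromRows (Q₁ * T) B = 1 := by
  rw [← fromBlocks_zero_one_mul_fromRows, ← hTB]
  refine ⟨?_, transpose_mul_self_mul_of_eq_one (fromBlocks_zero_one_transpose_mul_self hQ₁) hQ₂⟩
  rw [hA₁, ← fromBlocks_zero_one_mul_fromRows, hQ₂fac, Matrix.mul_assoc]
end

section
/- Let Q be an n×k real matrix with QᵀQ = I_k and let X be an n×s real matrix; set P = Qᵀ*X. Then rank(Xᵀ*X − Pᵀ*P) = rank([Q X]) − k, where [Q X] is the horizontally concatenated n×(k+s) matrix. -/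
/-!
Let `Y = X - Q Qᵀ X` be the part of `X` orthogonal to the columns of `Q`. Since `QᵀQ = I`,
a direct expansion gives `YᵀY = XᵀX - PᵀP`, so the left-hand side is `rank Y`. On the other
side, `[Q X] = [Q Y] · [[I, P], [0, I]]` with an invertible block factor, so
`rank [Q X] = rank [Q Y]`; and the column spaces of `Q` and `Y` meet only in `0`
(apply `Qᵀ`), whence `rank [Q Y] = rank Q + rank Y = k + rank Y`.
-/

open Matrix

namespace Matrix

section CommSemiring

variable {R m n₁ n₂ : Type*} [CommSemiring R] [Fintype n₁] [Fintype n₂]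

theorem range_mulVecLin_fromCols (A : Matrix m n₁ R) (B : Matrix m n₂ R) :
    LinearMap.range (fromCols A B).mulVecLin =
      LinearMap.range A.mulVecLin ⊔ LinearMap.range B.mulVecLin := by
  have hcol : (fromCols A B).col = Sum.elim A.col B.col := by
    funext j; cases j <;> rfl
  rw [range_mulVecLin, range_mulVecLin, range_mulVecLin, hcol, Set.Sum.elim_range,
    Submodule.span_union]

theorem disjoint_range_mulVecLin_of_transpose_mul [Fintype m] [DecidableEq n₁]
    {A : Matrix m n₁ R} {B : Matrix m n₂ R} (hA : Aᵀ * A = 1) (hAB : Aᵀ * B = 0) :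
    Disjoint (LinearMap.range A.mulVecLin) (LinearMap.range B.mulVecLin) := by
  rw [Submodule.disjoint_def]
  rintro _ ⟨v, rfl⟩ ⟨w, hw⟩
  have hv : v = 0 := by
    simpa [mulVec_mulVec, hA, hAB] using congrArg (Aᵀ *ᵥ ·) hw.symm
  simp [hv]

theorem rank_eq_card_of_transpose_mul_self_eq_one [Fintype m] [DecidableEq n₁]
    [StrongRankCondition R] {A : Matrix m n₁ R} (hA : Aᵀ * A = 1) :
    A.rank = Fintype.card n₁ :=
  le_antisymm A.rank_le_card_width (by simpa [hA] using rank_mul_le_right Aᵀ A)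

end CommSemiring

section Field

variable {K m n₁ n₂ : Type*} [Field K] [Fintype n₁] [Fintype n₂]

theorem rank_fromCols_of_disjoint {A : Matrix m n₁ K} {B : Matrix m n₂ K}
    (h : Disjoint (LinearMap.range A.mulVecLin) (LinearMap.range B.mulVecLin)) :
    (fromCols A B).rank = A.rank + B.rank := by
  have hdim := Submodule.finrank_sup_add_finrank_inf_eq
    (LinearMap.range A.mulVecLin) (LinearMap.range B.mulVecLin)
  rwa [h.eq_bot, finrank_bot, add_zero, ← range_mulVecLin_fromCols] at hdim

end Field

section CommRing

variable {R m n₁ n₂ : Type*} [CommRing R] [Fintype n₁]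

theorem rank_fromCols_sub_mul [Fintype n₂] [DecidableEq n₁] [DecidableEq n₂]
    (A : Matrix m n₁ R) (B : Matrix m n₂ R) (C : Matrix n₁ n₂ R) :
    (fromCols A (B - A * C)).rank = (fromCols A B).rank := by
  have hunit : IsUnit (fromBlocks (1 : Matrix n₁ n₁ R) C 0 1).det := by
    simp
  rw [← rank_mul_eq_left_of_isUnit_det _ _ hunit, fromCols_mul_fromBlocks]
  simp

variable [Fintype m] [DecidableEq n₁] {A : Matrix m n₁ R} (hA : Aᵀ * A = 1) (B : Matrix m n₂ R)
include hA

theorem transpose_mul_sub_mul_transpose_mul_eq_zero_s16 :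
    Aᵀ * (B - A * (Aᵀ * B)) = 0 := by
  rw [Matrix.mul_sub, ← Matrix.mul_assoc, hA, Matrix.one_mul, sub_self]

theorem transpose_mul_self_sub_mul_transpose_mul :
    (B - A * (Aᵀ * B))ᵀ * (B - A * (Aᵀ * B)) = Bᵀ * B - (Aᵀ * B)ᵀ * (Aᵀ * B) := by
  rw [transpose_sub, Matrix.sub_mul, transpose_mul A, Matrix.mul_assoc _ Aᵀ,
    transpose_mul_sub_mul_transpose_mul_eq_zero_s16 hA, Matrix.mul_zero, sub_zero, Matrix.mul_sub,
    transpose_mul, transpose_transpose, Matrix.mul_assoc]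

end CommRing

end Matrix

/-- the rank of `XᵀX − PᵀP` (with `P = QᵀX`) equals
`rank [Q X] − k`: the rank-revealing square root in the deflation step of
BCGS-PIP detects exactly the linear dependencies of `[Q X]` beyond `Q`. -/
theorem deflation_rank (n k s : ℕ)
    (Q : Matrix (Fin n) (Fin k) ℝ) (X : Matrix (Fin n) (Fin s) ℝ)
    (hQ : Qᵀ * Q = 1) (P : Matrix (Fin k) (Fin s) ℝ) (hP : P = Qᵀ * X) :
    (Xᵀ * X - Pᵀ * P).rank = (Matrix.fromCols Q X).rank - k := by
  subst hP
  have hdisj := disjoint_range_mulVecLin_of_transpose_mul hQ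
    (transpose_mul_sub_mul_transpose_mul_eq_zero_s16 hQ X)
  rw [← transpose_mul_self_sub_mul_transpose_mul hQ X, rank_transpose_mul_self,
    ← rank_fromCols_sub_mul Q X (Qᵀ * X), rank_fromCols_of_disjoint hdisj,
    rank_eq_card_of_transpose_mul_self_eq_one hQ, Fintype.card_fin, Nat.add_sub_cancel_left]
end
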